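/- Define the total time derivative d_T = ∂/∂t + Σ_{i≥0} q_{i+1}^A ∂/∂q_i^A acting on functions of (t, q_0,...,q_{2k-1}). On the constraint submanifold cut out by the functions ξ_r^A = p_A^{k-r} − Σ_{i=0}^{r-1} (−1)^i d_T^i(∂L̂/∂q_{k-r+1+i}^A) for 1 ≤ r ≤ k-1, the tangency condition X(ξ_r^A) = 0 for the dynamical vector field X (satisfying the equations of the previous statement) produces exactly the next constraint ξ_{r+1}^A = p_A^{k-r-1} − Σ_{i=0}^{r} (−1)^i d_T^i(∂L̂/∂q_{k-r+i}^A) = 0. -/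

import Mathlib

/-! **The constraint algorithm generates the Legendre–Ostrogradsky momenta.**

On `W_r ≅ ℝ × (ℝ^n)^{2k} × (ℝ^n)^k`, with the total time derivative
`d_T = ∂/∂t + Σ_i q_{i+1}^A ∂/∂q_i^A` acting on functions of
`(t, q_0, …, q_{2k-1})`, the constraints are
`ξ_r^A = p_A^{k-r} − Σ_{i=0}^{r-1} (−1)^i d_T^i(∂L̂/∂q_{k-r+1+i}^A)`,
`1 ≤ r ≤ k-1`.  For the dynamical vector field
`X = ∂/∂t + Σ_{l} q_{l+1}^A ∂/∂q_l^A + F_{2k-1}^A ∂/∂q_{2k-1}^A + G_A^i ∂/∂p_A^i`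
(with `G_A^0 = ∂L̂/∂q_0^A`, `G_A^i = ∂L̂/∂q_i^A − p_A^{i-1}`), the tangency
condition `X(ξ_r^A) = 0` produces exactly the next constraint:
`X(ξ_r^A) = −ξ_{r+1}^A`. -/

variable (n k : ℕ)

abbrev Jet (n k : ℕ) := ℝ × (Fin (2 * k) → Fin n → ℝ)

abbrev Wr (n k : ℕ) := ℝ × (Fin (2 * k) → Fin n → ℝ) × (Fin k → Fin n → ℝ)

/-- `∂L̂/∂q_j^A`. -/
noncomputable def pd (Lhat : Jet n k → ℝ) (j : Fin (2 * k)) (A : Fin n)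
    (x : Jet n k) : ℝ :=
  fderiv ℝ Lhat x ((0 : ℝ), Pi.single j (Pi.single A (1 : ℝ)))

/-- The total time derivative `d_T = ∂/∂t + Σ_{i=0}^{2k-2} q_{i+1}^A ∂/∂q_i^A`
on functions of `(t, q_0, …, q_{2k-1})`. -/
noncomputable def dT (f : Jet n k → ℝ) (x : Jet n k) : ℝ :=
  fderiv ℝ f x ((1 : ℝ), 0) +
    ∑ i : Fin (2 * k), ∑ A : Fin n,
      (if h : i.1 + 1 < 2 * k then x.2 ⟨i.1 + 1, h⟩ A else 0) *
        fderiv ℝ f x ((0 : ℝ), Pi.single i (Pi.single A (1 : ℝ)))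

/-- The constraint `ξ_r^A`, `1 ≤ r ≤ k`. -/
noncomputable def xiC (hk : 1 ≤ k) (Lhat : Jet n k → ℝ)
    (r : ℕ) (hr1 : 1 ≤ r) (hr2 : r ≤ k) (A : Fin n) (w : Wr n k) : ℝ :=
  w.2.2 ⟨k - r, by omega⟩ A -
    ∑ i : Fin r, (-1 : ℝ) ^ (i : ℕ) *
      (dT n k)^[i] (pd n k Lhat ⟨k - r + 1 + i.1, by have := i.isLt; omega⟩ A)
        (w.1, w.2.1)

/-- The dynamical vector field `X` of the unified formalism (its value at `w`),
with free top components `F_{2k-1} = Ftop`. -/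
noncomputable def Xvec (hk : 1 ≤ k) (Lhat : Jet n k → ℝ)
    (Ftop : Wr n k → Fin n → ℝ) (w : Wr n k) : Wr n k :=
  ((1 : ℝ),
   fun l A => if h : l.1 + 1 < 2 * k then w.2.1 ⟨l.1 + 1, h⟩ A else Ftop w A,
   fun i A =>
     if h : i.1 = 0 then pd n k Lhat ⟨0, by omega⟩ A (w.1, w.2.1)
     else pd n k Lhat ⟨i.1, by have := i.isLt; omega⟩ A (w.1, w.2.1) -
       w.2.2 ⟨i.1 - 1, by have := i.isLt; omega⟩ A)

/-! Write `ξ_r = p_{k-r} − S_r` with `S_r = Σ_{i<r} (−1)^i d_T^i(∂L̂/∂q_{k-r+1+i})`. Since `L̂`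
depends only on `q_0, …, q_k` and each `d_T` raises the order by one, `S_r` depends only on
`q_0, …, q_{k+r-1}`, and `k + r - 1 ≤ 2k - 2`. So `X` differentiates `S_r` exactly as `d_T`
does, whatever the free component `F_{2k-1}` is, while its `p`-component gives
`X(p_{k-r}) = ∂L̂/∂q_{k-r} − p_{k-r-1}`. The recursion `S_{r+1} = ∂L̂/∂q_{k-r} − d_T S_r`
then turns `X(ξ_r)` into `−ξ_{r+1}`. -/

section

variable {n k}

noncomputable def jetTrunc (m : ℕ) : Jet n k →L[ℝ] Jet n k :=
  (ContinuousLinearMap.id ℝ ℝ).prodMap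
    (ContinuousLinearMap.pi fun i : Fin (2 * k) =>
      if i.1 ≤ m then ContinuousLinearMap.proj i else 0)

lemma jetTrunc_apply (m : ℕ) (x : Jet n k) :
    jetTrunc m x = (x.1, fun i => if i.1 ≤ m then x.2 i else 0) := by
  refine Prod.ext rfl (funext fun i => ?_)
  by_cases h : i.1 ≤ m <;> simp [jetTrunc, h]

lemma jetTrunc_jetTrunc {m m' : ℕ} (h : m ≤ m') (x : Jet n k) :
    jetTrunc m (jetTrunc m' x) = jetTrunc m x := by
  simp only [jetTrunc_apply]
  refine Prod.ext rfl (funext fun i => ?_)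
  by_cases hi : i.1 ≤ m
  · simp [hi, hi.trans h]
  · simp [hi]

def DependsUpTo (m : ℕ) (f : Jet n k → ℝ) : Prop :=
  ∀ x, f (jetTrunc m x) = f x

namespace DependsUpTo

variable {m : ℕ} {f : Jet n k → ℝ}

lemma mono {m' : ℕ} (hf : DependsUpTo m f) (h : m ≤ m') : DependsUpTo m' f := fun x => by
  rw [← hf (jetTrunc m' x), jetTrunc_jetTrunc h, hf x]

lemma fderiv_eq_comp (hf : DependsUpTo m f) (hd : Differentiable ℝ f) (x : Jet n k) :
    fderiv ℝ f x = (fderiv ℝ f (jetTrunc m x)).comp (jetTrunc m) := by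
  have hcomp : f ∘ jetTrunc m = f := funext hf
  have h := (hd (jetTrunc m x)).hasFDerivAt.comp x (jetTrunc m).hasFDerivAt
  rw [hcomp] at h
  exact h.fderiv

lemma fderiv_jetTrunc (hf : DependsUpTo m f) (hd : Differentiable ℝ f) (x : Jet n k) :
    fderiv ℝ f (jetTrunc m x) = fderiv ℝ f x := by
  have h := hf.fderiv_eq_comp hd (jetTrunc m x)
  rw [jetTrunc_jetTrunc le_rfl] at h
  rw [hf.fderiv_eq_comp hd x, ← h]

lemma fderiv_apply (hf : DependsUpTo m f) (hd : Differentiable ℝ f) (v : Jet n k) :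
    DependsUpTo m (fun x => fderiv ℝ f x v) := fun x => by
  simp only [hf.fderiv_jetTrunc hd]

end DependsUpTo

def totalDir (x : Jet n k) : Jet n k :=
  ((1 : ℝ), fun i A => if h : i.1 + 1 < 2 * k then x.2 ⟨i.1 + 1, h⟩ A else 0)

lemma contDiff_totalDir : ContDiff ℝ (⊤ : ℕ∞) (totalDir : Jet n k → Jet n k) := by
  refine contDiff_const.prodMk (contDiff_pi.2 fun i => contDiff_pi.2 fun A => ?_)
  split_ifs
  · exact contDiff_pi.1 (contDiff_pi.1 contDiff_snd _) A
  · exact contDiff_const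

lemma jetTrunc_totalDir_jetTrunc (m : ℕ) (x : Jet n k) :
    jetTrunc m (totalDir (jetTrunc (m + 1) x)) = jetTrunc m (totalDir x) := by
  simp only [jetTrunc_apply, totalDir]
  refine Prod.ext rfl (funext fun i => funext fun A => ?_)
  by_cases hi : i.1 ≤ m
  · simp [hi, show i.1 + 1 ≤ m + 1 by omega]
  · simp [hi]

lemma jet_eq_sum_basis (a : ℝ) (v : Fin (2 * k) → Fin n → ℝ) :
    ((a, v) : Jet n k) = a • ((1 : ℝ), 0) +
      ∑ i : Fin (2 * k), ∑ B : Fin n, v i B • ((0 : ℝ), Pi.single i (Pi.single B (1 : ℝ))) := by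
  refine Prod.ext ?_ (funext fun l => funext fun B => ?_)
  · simp [Prod.fst_sum]
  · simp [Prod.snd_sum, Finset.sum_apply, Pi.single_apply]

lemma dT_eq_fderiv_totalDir (f : Jet n k → ℝ) (x : Jet n k) :
    dT n k f x = fderiv ℝ f x (totalDir x) := by
  rw [totalDir, jet_eq_sum_basis, map_add, map_smul, one_smul, map_sum]
  simp only [map_sum, map_smul, smul_eq_mul]
  rfl

lemma contDiff_dT {f : Jet n k → ℝ} (hf : ContDiff ℝ (⊤ : ℕ∞) f) :
    ContDiff ℝ (⊤ : ℕ∞) (dT n k f) := by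
  simp only [funext (dT_eq_fderiv_totalDir f)]
  exact (hf.fderiv_right (by exact_mod_cast le_top)).clm_apply contDiff_totalDir

lemma contDiff_iterate_dT {f : Jet n k → ℝ} (hf : ContDiff ℝ (⊤ : ℕ∞) f) (i : ℕ) :
    ContDiff ℝ (⊤ : ℕ∞) ((dT n k)^[i] f) := by
  induction i with
  | zero => exact hf
  | succ i ih => rw [Function.iterate_succ_apply']; exact contDiff_dT ih

lemma DependsUpTo.succ_dT {m : ℕ} {f : Jet n k → ℝ} (hf : DependsUpTo m f)
    (hd : Differentiable ℝ f) : DependsUpTo (m + 1) (dT n k f) := fun x => by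
  rw [dT_eq_fderiv_totalDir, dT_eq_fderiv_totalDir, hf.fderiv_eq_comp hd,
    hf.fderiv_eq_comp hd x, ContinuousLinearMap.comp_apply, ContinuousLinearMap.comp_apply,
    jetTrunc_jetTrunc (Nat.le_succ m), jetTrunc_totalDir_jetTrunc]

lemma DependsUpTo.add_iterate_dT {m : ℕ} {f : Jet n k → ℝ} (hf : DependsUpTo m f)
    (hc : ContDiff ℝ (⊤ : ℕ∞) f) (i : ℕ) : DependsUpTo (m + i) ((dT n k)^[i] f) := by
  induction i with
  | zero => exact hf
  | succ i ih =>
    rw [Function.iterate_succ_apply']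
    exact ih.succ_dT ((contDiff_iterate_dT hc i).differentiable (by simp))

lemma dT_sum {ι : Type*} [Fintype ι] (c : ι → ℝ) (f : ι → Jet n k → ℝ)
    (hf : ∀ j, Differentiable ℝ (f j)) (x : Jet n k) :
    dT n k (fun y => ∑ j, c j * f j y) x = ∑ j, c j * dT n k (f j) x := by
  simp only [dT_eq_fderiv_totalDir]
  rw [fderiv_fun_sum fun j _ => ((hf j) x).const_mul (c j), sum_apply]
  refine Finset.sum_congr rfl fun j _ => ?_
  rw [fderiv_const_mul ((hf j) x) (c j)]
  rfl

/-- `(1, V)` can differ from `totalDir x` only in the `q_{2k-1}` slot, which `f` ignores. -/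
lemma DependsUpTo.fderiv_eq_dT {f : Jet n k → ℝ} (hf : DependsUpTo (2 * k - 2) f)
    (hd : Differentiable ℝ f) (x : Jet n k) (V : Fin (2 * k) → Fin n → ℝ)
    (hV : ∀ (i : Fin (2 * k)) (h : i.1 + 1 < 2 * k), V i = x.2 ⟨i.1 + 1, h⟩) :
    fderiv ℝ f x ((1 : ℝ), V) = dT n k f x := by
  have htrunc : jetTrunc (2 * k - 2) ((1 : ℝ), V) = jetTrunc (2 * k - 2) (totalDir x) := by
    simp only [jetTrunc_apply, totalDir]
    refine Prod.ext rfl (funext fun i => ?_)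
    by_cases hi : i.1 ≤ 2 * k - 2
    · have h : i.1 + 1 < 2 * k := by omega
      simp [hi, hV i h, h]
    · simp [hi]
  rw [dT_eq_fderiv_totalDir, hf.fderiv_eq_comp hd, ContinuousLinearMap.comp_apply, htrunc,
    ← ContinuousLinearMap.comp_apply, ← hf.fderiv_eq_comp hd]

variable {Lhat : Jet n k → ℝ}

/-- With `b = k − r + 1` this is the sum `S_r` in `ξ_r = p_{k-r} − S_r`. -/
noncomputable def ostrogradskySum (Lhat : Jet n k → ℝ) (b r : ℕ) (hbr : b + r ≤ 2 * k)
    (A : Fin n) (x : Jet n k) : ℝ :=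
  ∑ i : Fin r, (-1 : ℝ) ^ (i : ℕ) *
    (dT n k)^[i] (pd n k Lhat ⟨b + i.1, by have := i.isLt; omega⟩ A) x

lemma contDiff_pd (hL : ContDiff ℝ (⊤ : ℕ∞) Lhat) (j : Fin (2 * k)) (A : Fin n) :
    ContDiff ℝ (⊤ : ℕ∞) (pd n k Lhat j A) :=
  (hL.fderiv_right (by exact_mod_cast le_top)).clm_apply contDiff_const

lemma contDiff_ostrogradskySum (hL : ContDiff ℝ (⊤ : ℕ∞) Lhat) (b r : ℕ)
    (hbr : b + r ≤ 2 * k) (A : Fin n) :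
    ContDiff ℝ (⊤ : ℕ∞) (ostrogradskySum Lhat b r hbr A) :=
  ContDiff.sum fun i _ => contDiff_const.mul (contDiff_iterate_dT (contDiff_pd hL _ A) i.1)

lemma dependsUpTo_ostrogradskySum (hL : ContDiff ℝ (⊤ : ℕ∞) Lhat)
    (hdep : DependsUpTo k Lhat) (b r : ℕ) (hbr : b + r ≤ 2 * k) (A : Fin n) :
    DependsUpTo (k + r - 1) (ostrogradskySum Lhat b r hbr A) := fun x => by
  refine Finset.sum_congr rfl fun i _ => congrArg _ ?_
  have hpd : DependsUpTo k (pd n k Lhat ⟨b + i.1, by omega⟩ A) :=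
    hdep.fderiv_apply (hL.differentiable (by simp)) _
  exact ((hpd.add_iterate_dT (contDiff_pd hL _ A) i.1).mono (by omega)) x

lemma ostrogradskySum_succ (hL : ContDiff ℝ (⊤ : ℕ∞) Lhat) (b r : ℕ)
    (hbr : b + 1 + r ≤ 2 * k) (A : Fin n) (x : Jet n k) :
    ostrogradskySum Lhat b (r + 1) (by omega) A x =
      pd n k Lhat ⟨b, by omega⟩ A x - dT n k (ostrogradskySum Lhat (b + 1) r hbr A) x := by
  have hdiff : ∀ i : Fin r, Differentiable ℝ
      ((dT n k)^[i.1] (pd n k Lhat ⟨b + 1 + i.1, by omega⟩ A)) := fun i =>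
    (contDiff_iterate_dT (contDiff_pd hL _ A) i.1).differentiable (by simp)
  unfold ostrogradskySum
  rw [dT_sum (fun i : Fin r => (-1 : ℝ) ^ (i : ℕ)) _ hdiff, Fin.sum_univ_succ, sub_eq_add_neg,
    ← Finset.sum_neg_distrib]
  congr 1
  · simp
  · refine Finset.sum_congr rfl fun i _ => ?_
    have hidx : (⟨b + (i.1 + 1), by omega⟩ : Fin (2 * k)) = ⟨b + 1 + i.1, by omega⟩ :=
      Fin.mk.inj_iff.2 (by omega)
    simp only [Fin.val_succ, hidx, Function.iterate_succ_apply', pow_succ]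
    ring

lemma fderiv_xiC_apply (hk : 1 ≤ k) (hL : ContDiff ℝ (⊤ : ℕ∞) Lhat) (r : ℕ) (hr1 : 1 ≤ r)
    (hr2 : r ≤ k) (A : Fin n) (w v : Wr n k) :
    fderiv ℝ (xiC n k hk Lhat r hr1 hr2 A) w v = v.2.2 ⟨k - r, by omega⟩ A -
      fderiv ℝ (ostrogradskySum Lhat (k - r + 1) r (by omega) A) (w.1, w.2.1) (v.1, v.2.1) := by
  have hS := (contDiff_ostrogradskySum hL (k - r + 1) r (by omega) A).differentiable (by simp)
  have h := ((hasFDerivAt_apply A _).comp w ((hasFDerivAt_apply ⟨k - r, by omega⟩ _).comp w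
    hasFDerivAt_snd.snd)).sub
    ((hS _).hasFDerivAt.comp w (hasFDerivAt_fst.prodMk hasFDerivAt_snd.fst))
  rw [(show HasFDerivAt (xiC n k hk Lhat r hr1 hr2 A) _ w from h).fderiv]
  rfl

end

/-- **Tangency produces the next constraint:** `X(ξ_r^A) = −ξ_{r+1}^A`. -/
theorem tangency_generates_next_constraint (hk : 1 ≤ k)
    (Lhat : Jet n k → ℝ) (hL : ContDiff ℝ (⊤ : ℕ∞) Lhat)
    (hdep : ∀ (t : ℝ) (q q' : Fin (2 * k) → Fin n → ℝ),
      (∀ i : Fin (2 * k), i.1 ≤ k → q i = q' i) → Lhat (t, q) = Lhat (t, q'))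
    (Ftop : Wr n k → Fin n → ℝ)
    (r : ℕ) (hr1 : 1 ≤ r) (hr2 : r ≤ k - 1) (A : Fin n) (w : Wr n k) :
    fderiv ℝ (xiC n k hk Lhat r hr1 (by omega) A) w
        (Xvec n k hk Lhat Ftop w) =
      -(xiC n k hk Lhat (r + 1) (by omega) (by omega) A w) := by
  have hLdep : DependsUpTo k Lhat := fun x => by
    rw [jetTrunc_apply]
    exact hdep x.1 _ x.2 fun i hi => if_pos hi
  have hSdep : DependsUpTo (2 * k - 2) (ostrogradskySum Lhat (k - r + 1) r (by omega) A) :=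
    (dependsUpTo_ostrogradskySum hL hLdep (k - r + 1) r _ A).mono (by omega)
  have hX_p : (Xvec n k hk Lhat Ftop w).2.2 ⟨k - r, by omega⟩ A =
      pd n k Lhat ⟨k - r, by omega⟩ A (w.1, w.2.1) - w.2.2 ⟨k - r - 1, by omega⟩ A :=
    dif_neg (show k - r ≠ 0 by omega)
  have hX_q := hSdep.fderiv_eq_dT
    ((contDiff_ostrogradskySum hL _ r _ A).differentiable (by simp)) (w.1, w.2.1)
    (Xvec n k hk Lhat Ftop w).2.1 fun i h => funext fun B => dif_pos h
  have hX_t : (Xvec n k hk Lhat Ftop w).1 = 1 := rfl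
  have hnext := ostrogradskySum_succ hL (k - r) r (by omega) A (w.1, w.2.1)
  have hxi_next : xiC n k hk Lhat (r + 1) (by omega) (by omega) A w =
      w.2.2 ⟨k - r - 1, by omega⟩ A -
        ostrogradskySum Lhat (k - r) (r + 1) (by omega) A (w.1, w.2.1) := by
    simp only [xiC, ostrogradskySum, show k - (r + 1) + 1 = k - r by omega, Nat.sub_sub]
  rw [fderiv_xiC_apply hk hL, hX_p, hX_t, hX_q, hxi_next, hnext]
  ring
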